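/- arXiv:2604.04959 — 5 statements merged into one kernel-verified Lean document; each statement's English description precedes it below -/
import Mathlib

section
/- Let f: M → M be measurable, 𝒫 a finite measurable partition, μ a (not necessarily invariant) probability measure, and n ≥ 1. Then (1/n) H(⋁_{i=0}^{n−1} f^{−i}𝒫, μ) ≤ H(𝒫, (1/n) ∑_{i=0}^{n−1} (f*)^i μ). In particular the entropy of a finite partition is a concave function of the measure: H(𝒫, ∑_k λ_k μ_k) ≥ ∑_k λ_k H(𝒫, μ_k) for any finite convex combination. -/
/-!
Joins have subadditive entropy, and `H(f⁻ⁱ𝒫, μ) ≤ H(𝒫, (fⁱ)_* μ)`, so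
`H(⋁_{i<n} f⁻ⁱ𝒫, μ) ≤ ∑_{i<n} H(𝒫, (fⁱ)_* μ)`. Concavity of `u ↦ -u log u` (Jensen, applied
to each `μ(A)`) makes `μ ↦ H(𝒫, μ)` concave, which bounds the average of the right-hand side by
`H(𝒫, (1/n) ∑_{i<n} (fⁱ)_* μ)`. Subadditivity is itself Jensen again, after the chain rule
`H(p) = H(r) + ∑ₐ r a · H(p a · / r a)` for a joint distribution `p` with first marginal `r`.
-/

open MeasureTheory
open scoped NNReal ENNReal

attribute [local instance] Classical.propDecidable

/-- A finite measurable partition of `M`. -/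
def IsPartition {M : Type*} [MeasurableSpace M] (P : Finset (Set M)) : Prop :=
  (∀ A ∈ P, MeasurableSet A) ∧ (⋃ A ∈ P, A) = Set.univ ∧
    ∀ A ∈ P, ∀ B ∈ P, A ≠ B → A ∩ B = ∅

/-- The entropy `H(𝒫, μ) = −∑_{P ∈ 𝒫} μ(P) log μ(P)` (convention `0·log 0 = 0`). -/
noncomputable def partEnt {M : Type*} [MeasurableSpace M]
    (μ : Measure M) (P : Finset (Set M)) : ℝ :=
  -∑ A ∈ P, (μ A).toReal * Real.log (μ A).toReal

/-- The dynamical join `⋁_{i=0}^{n-1} f⁻ⁱ 𝒫`. -/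
noncomputable def joinIter {M : Type*} (f : M → M) (P : Finset (Set M)) (n : ℕ) :
    Finset (Set M) :=
  Finset.image (fun a : Fin n → {A : Set M // A ∈ P} =>
    ⋂ i : Fin n, f^[(i : ℕ)] ⁻¹' ((a i : Set M))) Finset.univ

open Real (negMulLog)
open Finset

/-- Subadditivity of Shannon entropy. -/
theorem sum_sum_negMulLog_le {α β : Type*} {s : Finset α} {t : Finset β} {p : α → β → ℝ}
    (hp : ∀ a ∈ s, ∀ b ∈ t, 0 ≤ p a b) (hp1 : ∑ a ∈ s, ∑ b ∈ t, p a b = 1) :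
    ∑ a ∈ s, ∑ b ∈ t, negMulLog (p a b) ≤
      ∑ a ∈ s, negMulLog (∑ b ∈ t, p a b) + ∑ b ∈ t, negMulLog (∑ a ∈ s, p a b) := by
  set r : α → ℝ := fun a => ∑ b ∈ t, p a b
  have hr : ∀ a ∈ s, 0 ≤ r a := fun a ha => sum_nonneg (hp a ha)
  have hfactor : ∀ a ∈ s, ∀ b ∈ t, r a * (p a b / r a) = p a b := fun a ha b hb =>
    mul_div_cancel_of_imp' fun h0 =>
      le_antisymm ((single_le_sum (hp a ha) hb).trans h0.le) (hp a ha b hb)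
  have hchain : ∀ a ∈ s, ∑ b ∈ t, negMulLog (p a b) =
      negMulLog (r a) + ∑ b ∈ t, r a * negMulLog (p a b / r a) := by
    intro a ha
    calc ∑ b ∈ t, negMulLog (p a b)
        = ∑ b ∈ t, (p a b / r a * negMulLog (r a) + r a * negMulLog (p a b / r a)) :=
          sum_congr rfl fun b hb => by rw [← Real.negMulLog_mul, hfactor a ha b hb]
      _ = r a / r a * negMulLog (r a) + ∑ b ∈ t, r a * negMulLog (p a b / r a) := by
          rw [sum_add_distrib, ← sum_mul, ← sum_div]
      _ = _ := by
          rcases eq_or_ne (r a) 0 with h0 | h0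
          · simp [h0]
          · rw [div_self h0, one_mul]
  rw [sum_congr rfl hchain, sum_add_distrib, sum_comm (s := s)]
  gcongr with b hb
  calc ∑ a ∈ s, r a * negMulLog (p a b / r a)
      ≤ negMulLog (∑ a ∈ s, r a * (p a b / r a)) :=
        Real.concaveOn_negMulLog.le_map_sum hr hp1
          fun a ha => div_nonneg (hp a ha b hb) (hr a ha)
    _ = negMulLog (∑ a ∈ s, p a b) := by rw [sum_congr rfl fun a ha => hfactor a ha b hb]

noncomputable def partJoin {M : Type*} (P Q : Finset (Set M)) : Finset (Set M) :=
  (P ×ˢ Q).image fun AB => AB.1 ∩ AB.2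

namespace IsPartition

variable {M N : Type*} [MeasurableSpace M] [MeasurableSpace N] {P Q : Finset (Set M)}

theorem exists_mem (hP : IsPartition P) (x : M) : ∃ A ∈ P, x ∈ A := by
  have : x ∈ ⋃ A ∈ P, A := hP.2.1 ▸ Set.mem_univ x
  simpa using this

theorem disjoint (hP : IsPartition P) {A B : Set M} (hA : A ∈ P) (hB : B ∈ P) (hAB : A ≠ B) :
    Disjoint A B :=
  Set.disjoint_iff_inter_eq_empty.2 (hP.2.2 A hA B hB hAB)

theorem sum_measureReal_inter (hP : IsPartition P) (μ : Measure M) [IsFiniteMeasure μ]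
    {A : Set M} (hA : MeasurableSet A) : ∑ B ∈ P, μ.real (A ∩ B) = μ.real A := by
  rw [← measureReal_biUnion_finset (fun B hB B' hB' hne => (hP.disjoint hB hB' hne).mono
      Set.inter_subset_right Set.inter_subset_right) fun B hB => hA.inter (hP.1 B hB),
    ← Set.inter_iUnion₂, hP.2.1, Set.inter_univ]

theorem preimage (hP : IsPartition P) {g : N → M} (hg : Measurable g) :
    IsPartition (P.image (g ⁻¹' ·)) := by
  refine ⟨?_, ?_, ?_⟩
  · simpa using fun A hA => hg (hP.1 A hA)
  · refine Set.eq_univ_of_forall fun x => ?_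
    obtain ⟨A, hA, hxA⟩ := hP.exists_mem (g x)
    simpa using ⟨A, hA, hxA⟩
  · simp only [mem_image]
    rintro _ ⟨A, hA, rfl⟩ _ ⟨B, hB, rfl⟩ hne
    rw [← Set.preimage_inter, hP.2.2 A hA B hB (by rintro rfl; exact hne rfl),
      Set.preimage_empty]

theorem partJoin (hP : IsPartition P) (hQ : IsPartition Q) : IsPartition (partJoin P Q) := by
  refine ⟨?_, ?_, ?_⟩
  · simp only [_root_.partJoin, mem_image, mem_product, Prod.exists]
    rintro _ ⟨A, B, ⟨hA, hB⟩, rfl⟩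
    exact (hP.1 A hA).inter (hQ.1 B hB)
  · refine Set.eq_univ_of_forall fun x => ?_
    obtain ⟨A, hA, hxA⟩ := hP.exists_mem x
    obtain ⟨B, hB, hxB⟩ := hQ.exists_mem x
    simp only [_root_.partJoin, Set.mem_iUnion, mem_image, mem_product, Prod.exists]
    exact ⟨A ∩ B, ⟨A, B, ⟨hA, hB⟩, rfl⟩, hxA, hxB⟩
  · simp only [_root_.partJoin, mem_image, mem_product, Prod.exists]
    rintro _ ⟨A, B, ⟨hA, hB⟩, rfl⟩ _ ⟨A', B', ⟨hA', hB'⟩, rfl⟩ hne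
    rw [← Set.disjoint_iff_inter_eq_empty]
    by_cases hAA' : A = A'
    · subst hAA'
      exact (hQ.disjoint hB hB' (by rintro rfl; exact hne rfl)).mono
        Set.inter_subset_right Set.inter_subset_right
    · exact (hP.disjoint hA hA' hAA').mono Set.inter_subset_left Set.inter_subset_left

end IsPartition

section Entropy

variable {M N : Type*} [MeasurableSpace M] [MeasurableSpace N] {P Q : Finset (Set M)}

theorem partEnt_eq_sum_negMulLog (μ : Measure M) (P : Finset (Set M)) :
    partEnt μ P = ∑ A ∈ P, negMulLog (μ.real A) := by
  simp [partEnt, Real.negMulLog, measureReal_def]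

theorem partEnt_partJoin_le {μ : Measure M} [IsProbabilityMeasure μ] (hP : IsPartition P) (hQ : IsPartition Q) :
    partEnt μ (partJoin P Q) ≤ partEnt μ P + partEnt μ Q := by
  have hrowP : ∀ A ∈ P, ∑ B ∈ Q, μ.real (A ∩ B) = μ.real A := fun A hA =>
    hQ.sum_measureReal_inter μ (hP.1 A hA)
  have hcolQ : ∀ B ∈ Q, ∑ A ∈ P, μ.real (A ∩ B) = μ.real B := fun B hB => by
    simpa only [Set.inter_comm] using hP.sum_measureReal_inter μ (hQ.1 B hB)
  have htotal : ∑ A ∈ P, μ.real A = 1 := by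
    simpa using hP.sum_measureReal_inter μ MeasurableSet.univ
  simp only [partEnt_eq_sum_negMulLog, partJoin]
  calc ∑ C ∈ (P ×ˢ Q).image (fun AB => AB.1 ∩ AB.2), negMulLog (μ.real C)
      ≤ ∑ A ∈ P, ∑ B ∈ Q, negMulLog (μ.real (A ∩ B)) := by
        rw [← sum_product' (f := fun A B => negMulLog (μ.real (A ∩ B)))]
        exact sum_image_le_of_nonneg fun _ _ =>
          Real.negMulLog_nonneg measureReal_nonneg measureReal_le_one
    _ ≤ ∑ A ∈ P, negMulLog (∑ B ∈ Q, μ.real (A ∩ B)) +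
          ∑ B ∈ Q, negMulLog (∑ A ∈ P, μ.real (A ∩ B)) :=
        sum_sum_negMulLog_le (fun _ _ _ _ => measureReal_nonneg)
          (by rw [sum_congr rfl hrowP, htotal])
    _ = ∑ A ∈ P, negMulLog (μ.real A) + ∑ B ∈ Q, negMulLog (μ.real B) := by
        congr 1
        · exact sum_congr rfl fun A hA => by rw [hrowP A hA]
        · exact sum_congr rfl fun B hB => by rw [hcolQ B hB]

theorem partEnt_image_preimage_le {μ : Measure N} [IsProbabilityMeasure μ] (hP : IsPartition P)
    {g : N → M} (hg : Measurable g) : partEnt μ (P.image (g ⁻¹' ·)) ≤ partEnt (μ.map g) P := by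
  simp only [partEnt_eq_sum_negMulLog]
  calc ∑ C ∈ P.image (g ⁻¹' ·), negMulLog (μ.real C)
      ≤ ∑ A ∈ P, negMulLog (μ.real (g ⁻¹' A)) :=
        sum_image_le_of_nonneg fun _ _ =>
          Real.negMulLog_nonneg measureReal_nonneg measureReal_le_one
    _ = ∑ A ∈ P, negMulLog ((μ.map g).real A) :=
        sum_congr rfl fun A hA => by rw [map_measureReal_apply hg (hP.1 A hA)]

theorem sum_mul_partEnt_le_partEnt_sum_smul {ι : Type*} (s : Finset ι) (w : ι → ℝ≥0)
    (μs : ι → Measure M) [∀ i, IsFiniteMeasure (μs i)] (hw : ∑ i ∈ s, w i = 1)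
    (P : Finset (Set M)) :
    ∑ i ∈ s, (w i : ℝ) * partEnt (μs i) P ≤ partEnt (∑ i ∈ s, (w i : ℝ≥0∞) • μs i) P := by
  have hwR : ∑ i ∈ s, (w i : ℝ) = 1 := by exact_mod_cast hw
  simp only [partEnt_eq_sum_negMulLog, mul_sum]
  rw [sum_comm]
  gcongr with A
  have hmix : (∑ i ∈ s, (w i : ℝ≥0∞) • μs i).real A = ∑ i ∈ s, (w i : ℝ) * (μs i).real A := by
    simp only [Measure.coe_nnreal_smul]
    rw [measureReal_def, Measure.finsetSum_apply, ENNReal.toReal_sum fun i _ => measure_ne_top _ A]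
    simp only [← measureReal_def, measureReal_nnreal_smul_apply]
  rw [hmix]
  exact Real.concaveOn_negMulLog.le_map_sum (fun i _ => (w i).2) hwR
    fun i _ => measureReal_nonneg

end Entropy

section JoinIter

variable {M : Type*}

theorem joinIter_zero (f : M → M) (P : Finset (Set M)) : joinIter f P 0 = {Set.univ} := by
  ext C
  simp [joinIter]

theorem joinIter_succ (f : M → M) (P : Finset (Set M)) (n : ℕ) :
    joinIter f P (n + 1) = partJoin (joinIter f P n) (P.image (f^[n] ⁻¹' ·)) := by
  ext C
  simp only [joinIter, partJoin, mem_image, mem_product, mem_univ, true_and, Prod.exists]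
  constructor
  · rintro ⟨a, rfl⟩
    refine ⟨_, _, ⟨⟨fun i => a i.castSucc, rfl⟩, a (Fin.last n), (a (Fin.last n)).2, rfl⟩, ?_⟩
    ext x
    simp [Fin.forall_fin_succ']
  · rintro ⟨_, _, ⟨⟨b, rfl⟩, A, hA, rfl⟩, rfl⟩
    refine ⟨Fin.snoc b ⟨A, hA⟩, ?_⟩
    ext x
    simp [Fin.forall_fin_succ']

variable [MeasurableSpace M] {f : M → M} {P : Finset (Set M)}

theorem IsPartition.joinIter (hP : IsPartition P) (hf : Measurable f) (n : ℕ) :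
    IsPartition (joinIter f P n) := by
  induction n with
  | zero => simp [joinIter_zero, IsPartition]
  | succ n ih => rw [joinIter_succ]; exact ih.partJoin (hP.preimage (hf.iterate n))

theorem partEnt_joinIter_le (μ : Measure M) [IsProbabilityMeasure μ] (hP : IsPartition P)
    (hf : Measurable f) (n : ℕ) :
    partEnt μ (joinIter f P n) ≤ ∑ i ∈ range n, partEnt (μ.map f^[i]) P := by
  induction n with
  | zero => simp [joinIter_zero, partEnt]
  | succ n ih =>
    rw [joinIter_succ, sum_range_succ]
    calc partEnt μ (partJoin (joinIter f P n) (P.image (f^[n] ⁻¹' ·)))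
        ≤ partEnt μ (joinIter f P n) + partEnt μ (P.image (f^[n] ⁻¹' ·)) :=
          partEnt_partJoin_le (hP.joinIter hf n) (hP.preimage (hf.iterate n))
      _ ≤ _ := add_le_add ih (partEnt_image_preimage_le hP (hf.iterate n))

end JoinIter

/-- `(1/n) H(⋁_{i<n} f⁻ⁱ𝒫, μ) ≤ H(𝒫, (1/n) ∑_{i<n} (f*)ⁱμ)`; in particular
the entropy of a finite partition is a concave function of the measure:
`H(𝒫, ∑ λₖ μₖ) ≥ ∑ λₖ H(𝒫, μₖ)` for finite convex combinations. -/
theorem stmt_9 {M : Type*} [MeasurableSpace M] (μ : Measure M) [IsProbabilityMeasure μ]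
    (f : M → M) (hf : Measurable f)
    (P : Finset (Set M)) (hP : IsPartition P) (n : ℕ) (hn : 1 ≤ n) :
    partEnt μ (joinIter f P n) / n ≤
        partEnt (((n : ℝ≥0∞)⁻¹) • ∑ i ∈ Finset.range n, Measure.map f^[i] μ) P ∧
      ∀ (m : ℕ) (lam : Fin m → ℝ≥0) (μs : Fin m → Measure M),
        (∀ k, IsProbabilityMeasure (μs k)) → (∑ k, lam k = 1) →
        ∑ k, (lam k : ℝ) * partEnt (μs k) P ≤
          partEnt (∑ k, (lam k : ℝ≥0∞) • μs k) P := by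
  refine ⟨?_, fun m lam μs _ hlam => sum_mul_partEnt_le_partEnt_sum_smul univ lam μs hlam P⟩
  have hn0 : (n : ℝ≥0) ≠ 0 := Nat.cast_ne_zero.2 (Nat.one_le_iff_ne_zero.1 hn)
  have hw : ∑ _i ∈ range n, (n : ℝ≥0)⁻¹ = 1 := by simp [hn0]
  have hconc := sum_mul_partEnt_le_partEnt_sum_smul (range n) (fun _ => (n : ℝ≥0)⁻¹)
    (fun i => μ.map f^[i]) hw P
  rw [← mul_sum, ← smul_sum] at hconc
  push_cast [ENNReal.coe_inv hn0] at hconc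
  calc partEnt μ (joinIter f P n) / n ≤ (∑ i ∈ range n, partEnt (μ.map f^[i]) P) / n := by
        gcongr
        exact partEnt_joinIter_le μ hP hf n
    _ ≤ _ := by rwa [div_eq_inv_mul]
end

section
/- Let 𝒫 be a finite measurable partition of a compact metric space M and μ a Borel probability measure with μ(∂P) = 0 for every piece P ∈ 𝒫. If (μ_n) is a sequence of Borel probability measures converging to μ in the weak* topology, then lim_{n→∞} H(𝒫, μ_n) = H(𝒫, μ). -/
open MeasureTheory Filter Topology

theorem tendsto_partEnt_of_forall_tendsto {M ι : Type*} [MeasurableSpace M] {l : Filter ι}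
    (P : Finset (Set M)) {μ : Measure M} {μs : ι → Measure M}
    (h : ∀ A ∈ P, Tendsto (fun n => (μs n A).toReal) l (𝓝 (μ A).toReal)) :
    Tendsto (fun n => partEnt (μs n) P) l (𝓝 (partEnt μ P)) :=
  (tendsto_finsetSum P fun A hA =>
    (Real.continuous_mul_log.tendsto _).comp (h A hA)).neg

theorem tendsto_measure_toReal_of_null_frontier {M : Type*} [PseudoEMetricSpace M]
    [MeasurableSpace M] [OpensMeasurableSpace M]
    {μ : Measure M} [IsProbabilityMeasure μ]
    {μs : ℕ → Measure M} [∀ n, IsProbabilityMeasure (μs n)]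
    (hconv : ∀ φ : C(M, ℝ),
      Tendsto (fun n => ∫ x, φ x ∂(μs n)) atTop (𝓝 (∫ x, φ x ∂μ)))
    {A : Set M} (hA : μ (frontier A) = 0) :
    Tendsto (fun n => (μs n A).toReal) atTop (𝓝 (μ A).toReal) := by
  let ν : ProbabilityMeasure M := ⟨μ, inferInstance⟩
  let νs : ℕ → ProbabilityMeasure M := fun n => ⟨μs n, inferInstance⟩
  have hweak : Tendsto νs atTop (𝓝 ν) :=
    ProbabilityMeasure.tendsto_iff_forall_integral_tendsto.2 fun f => hconv f.toContinuousMap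
  exact (ENNReal.tendsto_toReal (measure_ne_top μ A)).comp
    (ProbabilityMeasure.tendsto_measure_of_null_frontier_of_tendsto' hweak hA)

theorem stmt_10_general {M : Type*} [MetricSpace M]
    [MeasurableSpace M] [BorelSpace M]
    (P : Finset (Set M))
    (μ : Measure M) [IsProbabilityMeasure μ]
    (hbd : ∀ A ∈ P, μ (frontier A) = 0)
    (μs : ℕ → Measure M) [∀ n, IsProbabilityMeasure (μs n)]
    (hconv : ∀ φ : C(M, ℝ),
      Tendsto (fun n => ∫ x, φ x ∂(μs n)) atTop (𝓝 (∫ x, φ x ∂μ))) :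
    Tendsto (fun n => partEnt (μs n) P) atTop (𝓝 (partEnt μ P)) :=
  tendsto_partEnt_of_forall_tendsto P fun A hA =>
    tendsto_measure_toReal_of_null_frontier hconv (hbd A hA)

/-- if `μ(∂P) = 0` for every piece `P` of a finite partition `𝒫` and
`μₙ → μ` weakly*, then `H(𝒫, μₙ) → H(𝒫, μ)`. -/
theorem stmt_10 {M : Type*} [MetricSpace M] [CompactSpace M]
    [MeasurableSpace M] [BorelSpace M]
    (P : Finset (Set M)) (hP : IsPartition P)
    (μ : Measure M) [IsProbabilityMeasure μ]
    (hbd : ∀ A ∈ P, μ (frontier A) = 0)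
    (μs : ℕ → Measure M) [∀ n, IsProbabilityMeasure (μs n)]
    (hconv : ∀ φ : C(M, ℝ),
      Tendsto (fun n => ∫ x, φ x ∂(μs n)) atTop (𝓝 (∫ x, φ x ∂μ))) :
    Tendsto (fun n => partEnt (μs n) P) atTop (𝓝 (partEnt μ P)) :=
  stmt_10_general P μ hbd μs hconv
end

section
/- Let f: M → M be a continuous map on a compact metric space that is expansive in the future with expansivity constant α. If 𝒫 is a finite Borel measurable partition with diam(𝒫) < α, then 𝒫 is a generator for f: the σ-algebra generated by the pieces of the partitions ⋁_{j=0}^k f^{−j}𝒫, over all k ≥ 0, is the Borel σ-algebra of M. -/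
/-!
Let `U` be open and `x ∈ U`. If no cylinder `⋂_{j ≤ k} f⁻ʲ(𝒫(fʲ x))` around `x` were contained
in `U`, pick `y_k` in the `k`-th one outside `U` and a limit point `z ∉ U` of the `y_k`.
Since `fⁿ y_k` and `fⁿ x` lie in a common piece for `k ≥ n`, continuity gives
`dist (fⁿ x) (fⁿ z) ≤ diam 𝒫 ≤ α` for every `n`, so `z = x ∈ U` by expansivity.
Hence every open set is a union of cylinders, and as there are only countably many
cylinders it lies in the σ-algebra they generate.
-/

open MeasureTheory MeasurableSpace Filter Topology Set

section

variable {M : Type*}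

/-- The pieces of the joins `⋁_{j=0}^k f⁻ʲ𝒫`, over all `k ≥ 0`. -/
def joinPieces (f : M → M) (P : Set (Set M)) : Set (Set M) :=
  {S | ∃ (k : ℕ) (a : Fin (k + 1) → Set M), (∀ i, a i ∈ P) ∧
    S = ⋂ i : Fin (k + 1), f^[(i : ℕ)] ⁻¹' a i}

lemma joinPieces_countable (f : M → M) {P : Set (Set M)} (hP : P.Finite) :
    (joinPieces f P).Countable := by
  have hsub : joinPieces f P ⊆ ⋃ k : ℕ,
      (fun a : Fin (k + 1) → Set M => ⋂ i : Fin (k + 1), f^[(i : ℕ)] ⁻¹' a i) ''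
        pi univ fun _ => P := by
    rintro S ⟨k, a, ha, rfl⟩
    exact mem_iUnion.2 ⟨k, a, fun i _ => ha i, rfl⟩
  exact (countable_iUnion fun k => ((Finite.pi fun _ => hP).countable).image _).mono hsub

lemma measurableSet_of_mem_joinPieces {m : MeasurableSpace M} {f : M → M} (hf : Measurable f)
    {P : Set (Set M)} (hP : ∀ A ∈ P, MeasurableSet A) {S : Set M} (hS : S ∈ joinPieces f P) :
    MeasurableSet S := by
  obtain ⟨k, a, ha, rfl⟩ := hS
  exact .iInter fun i => (hf.iterate (i : ℕ)) (hP _ (ha i))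

lemma eq_of_tendsto_of_eventually_dist_iterate_le [MetricSpace M] {f : M → M}
    (hf : Continuous f) {α : ℝ}
    (hexp : ∀ x y : M, (∀ n : ℕ, dist (f^[n] x) (f^[n] y) ≤ α) → x = y)
    {ι : Type*} {l : Filter ι} [l.NeBot] {x z : M} {y : ι → M} (hy : Tendsto y l (𝓝 z))
    (hclose : ∀ n, ∀ᶠ k in l, dist (f^[n] x) (f^[n] (y k)) ≤ α) : x = z :=
  hexp x z fun n =>
    le_of_tendsto (tendsto_const_nhds.dist (((hf.iterate n).tendsto z).comp hy)) (hclose n)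

lemma exists_mem_joinPieces_subset_of_isOpen [MetricSpace M] [CompactSpace M] {f : M → M}
    (hf : Continuous f) {α : ℝ}
    (hexp : ∀ x y : M, (∀ n : ℕ, dist (f^[n] x) (f^[n] y) ≤ α) → x = y)
    {P : Set (Set M)} (hcover : ∀ x, ∃ A ∈ P, x ∈ A) (hdiam : ∀ A ∈ P, Metric.diam A ≤ α)
    {U : Set M} (hU : IsOpen U) {x : M} (hx : x ∈ U) :
    ∃ S ∈ joinPieces f P, x ∈ S ∧ S ⊆ U := by
  choose p hpP hp using hcover
  let cylinder (k : ℕ) : Set M := ⋂ i : Fin (k + 1), f^[(i : ℕ)] ⁻¹' p (f^[(i : ℕ)] x)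
  have hcyl_mem k : cylinder k ∈ joinPieces f P := ⟨k, _, fun _ => hpP _, rfl⟩
  have hx_cyl k : x ∈ cylinder k := mem_iInter.2 fun _ => hp _
  by_contra! h
  have hy k : ∃ y ∈ cylinder k, y ∉ U := not_subset.1 (h _ (hcyl_mem k) (hx_cyl k))
  choose y hy_cyl hyU using hy
  obtain ⟨z, φ, hφ, hz⟩ := CompactSpace.tendsto_subseq y
  have hzU : z ∉ U :=
    hU.isClosed_compl.mem_of_tendsto hz (Eventually.of_forall fun k => hyU (φ k))
  refine hzU ((eq_of_tendsto_of_eventually_dist_iterate_le hf hexp hz fun n => ?_) ▸ hx)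
  filter_upwards [eventually_ge_atTop n] with k hk
  have hy_piece : f^[n] (y (φ k)) ∈ p (f^[n] x) :=
    mem_iInter.1 (hy_cyl (φ k)) ⟨n, Nat.lt_succ_of_le (hk.trans hφ.le_apply)⟩
  calc dist (f^[n] x) (f^[n] (y (φ k))) ≤ Metric.diam (p (f^[n] x)) :=
        Metric.dist_le_diam_of_mem Metric.isBounded_of_compactSpace (hp _) hy_piece
    _ ≤ α := hdiam _ (hpP _)

lemma borel_le_generateFrom_of_countable [TopologicalSpace M] {G : Set (Set M)}
    (hG : G.Countable) (h : ∀ U, IsOpen U → ∀ x ∈ U, ∃ S ∈ G, x ∈ S ∧ S ⊆ U) :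
    borel M ≤ generateFrom G := by
  refine generateFrom_le fun U hU => ?_
  have hU_eq : U = ⋃₀ {S | S ∈ G ∧ S ⊆ U} := by
    refine Subset.antisymm (fun x hx => ?_) (sUnion_subset fun S hS => hS.2)
    obtain ⟨S, hSG, hxS, hSU⟩ := h U hU x hx
    exact ⟨S, ⟨hSG, hSU⟩, hxS⟩
  rw [hU_eq]
  exact .sUnion (hG.mono fun S hS => hS.1) fun S hS => measurableSet_generateFrom hS.1

end

theorem stmt_11_general {M : Type*} [MetricSpace M] [CompactSpace M]
    (f : M → M) (hf : Continuous f)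
    (α : ℝ)
    (hexp : ∀ x y : M, (∀ n : ℕ, dist (f^[n] x) (f^[n] y) ≤ α) → x = y)
    (P : Finset (Set M))
    (hmeas : ∀ A ∈ P, MeasurableSet[borel M] A)
    (hcover : (⋃ A ∈ P, A) = Set.univ)
    (hdiam : ∀ A ∈ P, Metric.diam A < α) :
    MeasurableSpace.generateFrom
      {S : Set M | ∃ (k : ℕ) (a : Fin (k + 1) → Set M),
        (∀ i, a i ∈ P) ∧ S = ⋂ i : Fin (k + 1), f^[(i : ℕ)] ⁻¹' a i} = borel M := by
  have hcover' (x : M) : ∃ A ∈ (P : Set (Set M)), x ∈ A := by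
    have hx : x ∈ ⋃ A ∈ P, A := hcover ▸ mem_univ x
    simpa using hx
  change generateFrom (joinPieces f P) = borel M
  refine le_antisymm (generateFrom_le fun S hS => ?_) ?_
  · exact measurableSet_of_mem_joinPieces hf.borel_measurable hmeas hS
  · exact borel_le_generateFrom_of_countable (joinPieces_countable f P.finite_toSet)
      fun U hU x hx => exists_mem_joinPieces_subset_of_isOpen hf hexp hcover'
        (fun A hA => (hdiam A hA).le) hU hx

/-- for a continuous map, expansive in the future with constant `α`, any
finite Borel partition with diameter `< α` is a generator: the σ-algebra generated by the
pieces of all the joins `⋁_{j=0}^k f⁻ʲ𝒫` is the Borel σ-algebra. -/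
theorem stmt_11 {M : Type*} [MetricSpace M] [CompactSpace M]
    (f : M → M) (hf : Continuous f)
    (α : ℝ) (hα : 0 < α)
    (hexp : ∀ x y : M, (∀ n : ℕ, dist (f^[n] x) (f^[n] y) ≤ α) → x = y)
    (P : Finset (Set M))
    (hmeas : ∀ A ∈ P, MeasurableSet[borel M] A)
    (hcover : (⋃ A ∈ P, A) = Set.univ)
    (hdisj : ∀ A ∈ P, ∀ B ∈ P, A ≠ B → A ∩ B = ∅)
    (hdiam : ∀ A ∈ P, Metric.diam A < α) :
    MeasurableSpace.generateFrom
      {S : Set M | ∃ (k : ℕ) (a : Fin (k + 1) → Set M),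
        (∀ i, a i ∈ P) ∧ S = ⋂ i : Fin (k + 1), f^[(i : ℕ)] ⁻¹' a i} = borel M :=
  stmt_11_general f hf α hexp P hmeas hcover hdiam
end

section
/- Let f: M → M be continuous on a compact metric space, expansive in the future with constant α, and 𝒫 a finite Borel partition with diam(𝒫) < α. Then for every 0 < δ < α there exists k ≥ 0 such that for every x ∈ M, the piece of the partition ⋁_{i=0}^k f^{−i}𝒫 containing x is contained in the open ball of radius δ centered at x. -/
/-!
Points whose orbits stay `α`-close for all time coincide; by compactness of
`{(x, y) | δ ≤ dist x y}` and closedness of the conditions `dist (fⁿ x) (fⁿ y) ≤ α`, finitely many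
of these conditions already force `dist x y < δ`. Two points in the same piece of
`⋁_{i ≤ k} f⁻ⁱ𝒫` have their first `k` iterates in common pieces, hence `α`-close.
-/

open Bornology

theorem exists_dist_lt_of_forall_dist_iterate_le {M : Type*} [MetricSpace M] [CompactSpace M]
    {f : M → M} (hf : Continuous f) {α : ℝ}
    (hexp : ∀ x y : M, (∀ n : ℕ, dist (f^[n] x) (f^[n] y) ≤ α) → x = y)
    {δ : ℝ} (hδ : 0 < δ) :
    ∃ N : ℕ, ∀ x y : M, (∀ n ≤ N, dist (f^[n] x) (f^[n] y) ≤ α) → dist x y < δ := by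
  set far : Set (M × M) := {p | δ ≤ dist p.1 p.2}
  set close : ℕ → Set (M × M) := fun n => {p | dist (f^[n] p.1) (f^[n] p.2) ≤ α}
  have hfar : IsCompact far :=
    (isClosed_le continuous_const continuous_dist).isCompact
  have hclose (n : ℕ) : IsClosed (close n) :=
    isClosed_le (((hf.iterate n).comp continuous_fst).dist ((hf.iterate n).comp continuous_snd))
      continuous_const
  have hempty : far ∩ ⋂ n, close n = ∅ := by
    refine Set.eq_empty_of_forall_notMem fun p ⟨hp, hpc⟩ => ?_
    have hxy : p.1 = p.2 := hexp _ _ fun n => Set.mem_iInter.mp hpc n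
    simp only [far, Set.mem_ofPred_eq, hxy, dist_self] at hp
    linarith
  obtain ⟨u, hu⟩ := hfar.elim_finite_subfamily_closed close hclose hempty
  refine ⟨u.sup id, fun x y hxy => not_le.mp fun hδxy => ?_⟩
  have hmem : (x, y) ∈ far ∩ ⋂ n ∈ u, close n :=
    ⟨hδxy, Set.mem_iInter₂.mpr fun n hn => hxy n (Finset.le_sup (f := id) hn)⟩
  rw [hu] at hmem
  exact hmem

theorem stmt_12_general {M : Type*} [MetricSpace M] [CompactSpace M]
    (f : M → M) (hf : Continuous f)
    (α : ℝ)
    (hexp : ∀ x y : M, (∀ n : ℕ, dist (f^[n] x) (f^[n] y) ≤ α) → x = y)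
    (P : Finset (Set M))
    (hcover : (⋃ A ∈ P, A) = Set.univ)
    (hdiam : ∀ A ∈ P, Metric.diam A < α)
    (δ : ℝ) (hδ0 : 0 < δ) :
    ∃ k : ℕ, ∀ x y : M,
      (∀ i ≤ k, ∀ A ∈ P, f^[i] x ∈ A → f^[i] y ∈ A) → dist x y < δ := by
  obtain ⟨k, hk⟩ := exists_dist_lt_of_forall_dist_iterate_le hf hexp hδ0
  refine ⟨k, fun x y hxy => hk x y fun i hi => ?_⟩
  obtain ⟨A, hA, hxA⟩ : ∃ A ∈ P, f^[i] x ∈ A := by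
    simpa using hcover.ge (Set.mem_univ (f^[i] x))
  exact (Metric.dist_le_diam_of_mem (IsBounded.all A) hxA (hxy i hi A hA hxA)).trans
    (hdiam A hA).le

/-- for a continuous map `f`, expansive in the future with constant `α`, and a
finite Borel partition `𝒫` with diameter `< α`, for every `0 < δ < α` there exists `k` such
that for every `x` the piece of `⋁_{i=0}^k f⁻ⁱ𝒫` containing `x` is contained in the open ball
of radius `δ` centered at `x` (i.e. every `y` in the same piece satisfies `dist x y < δ`). -/
theorem stmt_12 {M : Type*} [MetricSpace M] [CompactSpace M]
    [MeasurableSpace M] [BorelSpace M]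
    (f : M → M) (hf : Continuous f)
    (α : ℝ) (hα : 0 < α)
    (hexp : ∀ x y : M, (∀ n : ℕ, dist (f^[n] x) (f^[n] y) ≤ α) → x = y)
    (P : Finset (Set M))
    (hmeas : ∀ A ∈ P, MeasurableSet A)
    (hcover : (⋃ A ∈ P, A) = Set.univ)
    (hdisj : ∀ A ∈ P, ∀ B ∈ P, A ≠ B → A ∩ B = ∅)
    (hdiam : ∀ A ∈ P, Metric.diam A < α)
    (δ : ℝ) (hδ0 : 0 < δ) (hδα : δ < α) :
    ∃ k : ℕ, ∀ x y : M,
      (∀ i ≤ k, ∀ A ∈ P, f^[i] x ∈ A → f^[i] y ∈ A) → dist x y < δ :=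
  stmt_12_general f hf α hexp P hcover hdiam δ hδ0
end

section
/- Let K ⊂ [−1,1] be the Cantor set dynamically defined by an expanding map G on I₀ ∪ I₁ as in Bowen's construction, with positive Lebesgue measure m(K) > 0, and such that every atom of generation n has equal Lebesgue measure. Then the probability measure μ_K(B) := m(B ∩ K)/m(K) is invariant under the circle map f extending G, i.e. μ_K(f^{−1}(B)) = μ_K(B) for every Borel set B. -/
/-!
Equal measure of the atoms of each generation passes to their traces on `K`: the trace of an
atom is the decreasing limit of the unions of its refinements of a given depth, and the measures
of these unions depend only on the generation. Since `K ⊆ I₀ ∪ I₁` and `f(K) ⊆ K`, the trace of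
`f⁻¹(I_w)` is the disjoint union of the traces of `I_{0w}` and `I_{1w}`, and the trace of `I_w`
that of `I_{w0}` and `I_{w1}`; all four have the same generation, so `μ_K` is `f`-invariant on
atoms. Atoms form a π-system, so invariance extends to the σ-algebra they generate. Finally,
by expansion the atoms containing a point of `K` shrink to it, so every Borel set agrees on `K`
with a set of that σ-algebra.
-/

open MeasureTheory

namespace Repeller

open Set

variable {α : Type*} {f : α → α} {I₀ I₁ : Set α}

/-- The atom `I_w`. -/
def cylinder (f : α → α) (I₀ I₁ : Set α) : List Bool → Set α
  | [] => univ
  | a :: w => (if a then I₁ else I₀) ∩ f ⁻¹' cylinder f I₀ I₁ w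

local notation "𝓒" => cylinder f I₀ I₁

@[simp] lemma cylinder_nil : 𝓒 [] = univ := rfl

@[simp] lemma cylinder_cons (a : Bool) (w : List Bool) :
    𝓒 (a :: w) = (if a then I₁ else I₀) ∩ f ⁻¹' 𝓒 w := rfl

lemma cylinder_eq_setOf (w : List Bool) : 𝓒 w =
    {x | ∀ j : Fin w.length, f^[(j : ℕ)] x ∈ if w.get j then I₁ else I₀} := by
  induction w with
  | nil => ext x; simp
  | cons a w ih =>
    ext x
    cases a <;> simp [ih, Fin.forall_fin_succ, Function.iterate_succ_apply]

lemma cylinder_append (w u : List Bool) : 𝓒 (w ++ u) = 𝓒 w ∩ f^[w.length] ⁻¹' 𝓒 u := by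
  induction w with
  | nil => simp
  | cons a w ih => simp [ih, inter_assoc, Function.iterate_succ, preimage_comp]

lemma cylinder_subset_of_prefix {w w' : List Bool} (h : w <+: w') : 𝓒 w' ⊆ 𝓒 w := by
  obtain ⟨u, rfl⟩ := h
  rw [cylinder_append]
  exact inter_subset_left

lemma iterate_mem_of_mem_cylinder {w : List Bool} {x : α} (hx : x ∈ 𝓒 w)
    {k : ℕ} (hk : k < w.length) : f^[k] x ∈ I₀ ∪ I₁ := by
  rw [cylinder_eq_setOf] at hx
  have := hx ⟨k, hk⟩
  split_ifs at this
  exacts [Or.inr this, Or.inl this]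

lemma cylinder_subset_union {w : List Bool} (hw : w ≠ []) : 𝓒 w ⊆ I₀ ∪ I₁ :=
  fun _ hx => iterate_mem_of_mem_cylinder hx (List.length_pos_iff.2 hw)

lemma disjoint_cylinder (hI : Disjoint I₀ I₁) {w w' : List Bool} (h : ¬w <+: w')
    (h' : ¬w' <+: w) : Disjoint (𝓒 w) (𝓒 w') := by
  induction w generalizing w' with
  | nil => exact absurd (List.nil_prefix) h
  | cons a w ih =>
    cases w' with
    | nil => exact absurd (List.nil_prefix) h'
    | cons a' w' =>
      simp only [List.cons_prefix_cons, not_and] at h h'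
      rw [cylinder_cons, cylinder_cons]
      by_cases ha : a = a'
      · exact ((ih (h ha) (h' ha.symm)).preimage f).mono inter_subset_right inter_subset_right
      · refine Disjoint.mono inter_subset_left inter_subset_left ?_
        cases a <;> cases a' <;> simp_all [hI.symm]

lemma disjoint_cylinder_of_length_eq (hI : Disjoint I₀ I₁) {w w' : List Bool}
    (hlen : w.length = w'.length) (hne : w ≠ w') : Disjoint (𝓒 w) (𝓒 w') :=
  disjoint_cylinder hI (fun h => hne (h.eq_of_length hlen))
    (fun h => hne (h.eq_of_length hlen.symm).symm)

lemma isPiSystem_range_cylinder (hI : Disjoint I₀ I₁) : IsPiSystem (range 𝓒) := by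
  rintro _ ⟨w, rfl⟩ _ ⟨w', rfl⟩ hne
  by_cases h : w <+: w'
  · exact ⟨w', (inter_eq_right.2 (cylinder_subset_of_prefix h)).symm⟩
  by_cases h' : w' <+: w
  · exact ⟨w, (inter_eq_left.2 (cylinder_subset_of_prefix h')).symm⟩
  exact absurd hne (not_nonempty_iff_eq_empty.2 (disjoint_cylinder hI h h').inter_eq)

def cantor (f : α → α) (I₀ I₁ : Set α) : Set α := {x | ∀ n, f^[n] x ∈ I₀ ∪ I₁}

local notation "𝓚" => cantor f I₀ I₁

lemma cantor_subset_union : 𝓚 ⊆ I₀ ∪ I₁ := fun _ hx => hx 0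

lemma mapsTo_cantor : MapsTo f 𝓚 𝓚 := fun x hx n => by
  simpa only [Function.iterate_succ_apply] using hx (n + 1)

open Classical in
noncomputable def itinerary (f : α → α) (I₁ : Set α) (x : α) (n : ℕ) : Fin n → Bool :=
  fun i => decide (f^[(i : ℕ)] x ∈ I₁)

lemma mem_cylinder_itinerary {x : α} {n : ℕ} (hx : ∀ k < n, f^[k] x ∈ I₀ ∪ I₁) :
    x ∈ 𝓒 (List.ofFn (itinerary f I₁ x n)) := by
  rw [cylinder_eq_setOf]
  intro j
  have hj : (j : ℕ) < n := by simpa using j.2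
  by_cases h : f^[(j : ℕ)] x ∈ I₁
  · simp [itinerary, h]
  · simpa [itinerary, h] using (hx j hj).resolve_right h

def refinement (f : α → α) (I₀ I₁ : Set α) (w : List Bool) (m : ℕ) : Set α :=
  ⋃ v : Fin m → Bool, cylinder f I₀ I₁ (w ++ List.ofFn v)

lemma antitone_refinement (w : List Bool) : Antitone (refinement f I₀ I₁ w) := by
  refine antitone_nat_of_succ_le fun m => iUnion_subset fun v => ?_
  refine subset_iUnion_of_subset (fun i => v i.castSucc) (cylinder_subset_of_prefix ?_)
  rw [List.ofFn_succ', List.concat_eq_append, ← List.append_assoc]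
  exact List.prefix_append _ _

lemma cylinder_inter_cantor_eq_iInter_refinement (w : List Bool) :
    𝓒 w ∩ 𝓚 = ⋂ m, refinement f I₀ I₁ w m := by
  ext x
  simp only [refinement, mem_inter_iff, mem_iInter, mem_iUnion]
  constructor
  · rintro ⟨hw, hx⟩ m
    refine ⟨itinerary f I₁ (f^[w.length] x) m, ?_⟩
    rw [cylinder_append]
    refine ⟨hw, mem_cylinder_itinerary fun k _ => ?_⟩
    rw [← Function.iterate_add_apply]
    exact hx _
  · intro hx
    obtain ⟨v, hv⟩ := hx 0
    refine ⟨cylinder_subset_of_prefix (List.prefix_append _ _) hv, fun k => ?_⟩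
    obtain ⟨v, hv⟩ := hx (k + 1)
    exact iterate_mem_of_mem_cylinder hv (by simp; omega)

lemma refinement_one_subset_union (w : List Bool) : refinement f I₀ I₁ w 1 ⊆ I₀ ∪ I₁ :=
  iUnion_subset fun _ => cylinder_subset_union (by simp)

lemma preimage_cylinder_inter_cantor_eq_union (w : List Bool) :
    f ⁻¹' 𝓒 w ∩ 𝓚 = 𝓒 (false :: w) ∩ 𝓚 ∪ 𝓒 (true :: w) ∩ 𝓚 := by
  ext x
  have := @cantor_subset_union _ f I₀ I₁ x
  simp only [cylinder_cons, mem_union, mem_inter_iff, mem_preimage] at this ⊢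
  tauto

lemma cylinder_inter_cantor_eq_union (w : List Bool) :
    𝓒 w ∩ 𝓚 = 𝓒 (w ++ [false]) ∩ 𝓚 ∪ 𝓒 (w ++ [true]) ∩ 𝓚 := by
  ext x
  have := fun hx : x ∈ 𝓚 => hx w.length
  simp only [cylinder_append, cylinder_cons, cylinder_nil, mem_union, mem_inter_iff,
    mem_preimage, preimage_univ, inter_univ] at this ⊢
  tauto

section Measure

variable [MeasurableSpace α]

lemma measurableSet_cylinder (hf : Measurable f) (h₀ : MeasurableSet I₀)
    (h₁ : MeasurableSet I₁) (w : List Bool) : MeasurableSet (𝓒 w) := by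
  induction w with
  | nil => exact MeasurableSet.univ
  | cons a w ih => exact (by cases a <;> simpa : MeasurableSet (if a then I₁ else I₀)).inter (hf ih)

lemma measurableSet_cantor (hf : Measurable f) (h₀ : MeasurableSet I₀)
    (h₁ : MeasurableSet I₁) : MeasurableSet 𝓚 := by
  have : 𝓚 = ⋂ n, f^[n] ⁻¹' (I₀ ∪ I₁) := by ext; simp [cantor]
  rw [this]
  exact MeasurableSet.iInter fun n => (hf.iterate n) (h₀.union h₁)

variable {μ : Measure α}

lemma measure_refinement_congr (hf : Measurable f) (h₀ : MeasurableSet I₀)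
    (h₁ : MeasurableSet I₁) (hI : Disjoint I₀ I₁)
    (hequal : ∀ w w' : List Bool, w.length = w'.length → μ (𝓒 w) = μ (𝓒 w'))
    {w w' : List Bool} (hlen : w.length = w'.length) (m : ℕ) :
    μ (refinement f I₀ I₁ w m) = μ (refinement f I₀ I₁ w' m) := by
  have hdisj (w : List Bool) :
      Pairwise (Function.onFun Disjoint fun v : Fin m → Bool => 𝓒 (w ++ List.ofFn v)) :=
    fun v v' hne => disjoint_cylinder_of_length_eq hI (by simp)
      fun h => hne (List.ofFn_injective (List.append_cancel_left h))
  simp only [refinement]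
  rw [measure_iUnion (hdisj w) fun _ => measurableSet_cylinder hf h₀ h₁ _,
    measure_iUnion (hdisj w') fun _ => measurableSet_cylinder hf h₀ h₁ _]
  exact tsum_congr fun v => hequal _ _ (by simp [hlen])

lemma measure_cylinder_inter_cantor_congr (hf : Measurable f) (h₀ : MeasurableSet I₀)
    (h₁ : MeasurableSet I₁) (hI : Disjoint I₀ I₁) (hμ : μ (I₀ ∪ I₁) ≠ ⊤)
    (hequal : ∀ w w' : List Bool, w.length = w'.length → μ (𝓒 w) = μ (𝓒 w'))
    {w w' : List Bool} (hlen : w.length = w'.length) : μ (𝓒 w ∩ 𝓚) = μ (𝓒 w' ∩ 𝓚) := by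
  have hlim (w : List Bool) : Filter.Tendsto (fun m => μ (refinement f I₀ I₁ w m))
      Filter.atTop (nhds (μ (𝓒 w ∩ 𝓚))) := by
    rw [cylinder_inter_cantor_eq_iInter_refinement]
    exact tendsto_measure_iInter_atTop
      (fun _ => (MeasurableSet.iUnion fun _ => measurableSet_cylinder hf h₀ h₁ _).nullMeasurableSet)
      (antitone_refinement w)
      ⟨1, ne_top_of_le_ne_top hμ (measure_mono (refinement_one_subset_union w))⟩
  refine tendsto_nhds_unique (hlim w) ?_
  simpa only [measure_refinement_congr hf h₀ h₁ hI hequal hlen] using hlim w'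

lemma measure_preimage_cylinder_inter_cantor (hf : Measurable f) (h₀ : MeasurableSet I₀)
    (h₁ : MeasurableSet I₁) (hI : Disjoint I₀ I₁) (hμ : μ (I₀ ∪ I₁) ≠ ⊤)
    (hequal : ∀ w w' : List Bool, w.length = w'.length → μ (𝓒 w) = μ (𝓒 w'))
    (w : List Bool) : μ (f ⁻¹' 𝓒 w ∩ 𝓚) = μ (𝓒 w ∩ 𝓚) := by
  have hmeas (w : List Bool) : MeasurableSet (𝓒 w ∩ 𝓚) :=
    (measurableSet_cylinder hf h₀ h₁ w).inter (measurableSet_cantor hf h₀ h₁)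
  have hdisj {w w' : List Bool} (hlen : w.length = w'.length) (hne : w ≠ w') :
      Disjoint (𝓒 w ∩ 𝓚) (𝓒 w' ∩ 𝓚) :=
    (disjoint_cylinder_of_length_eq hI hlen hne).mono inter_subset_left inter_subset_left
  have hcongr (a : Bool) := measure_cylinder_inter_cantor_congr hf h₀ h₁ hI hμ hequal
    (w := a :: w) (w' := w ++ [a]) (by simp)
  rw [preimage_cylinder_inter_cantor_eq_union, cylinder_inter_cantor_eq_union w,
    measure_union (hdisj (w := false :: w) (w' := true :: w) rfl (by simp)) (hmeas _),
    measure_union (hdisj (w := w ++ [false]) (w' := w ++ [true]) (by simp) (by simp)) (hmeas _),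
    hcongr false, hcongr true]

open MeasurableSpace in
lemma measure_preimage_inter_cantor_of_measurableSet_generateFrom (hf : Measurable f)
    (h₀ : MeasurableSet I₀) (h₁ : MeasurableSet I₁) (hI : Disjoint I₀ I₁)
    (hμ : μ (I₀ ∪ I₁) ≠ ⊤)
    (hequal : ∀ w w' : List Bool, w.length = w'.length → μ (𝓒 w) = μ (𝓒 w'))
    {t : Set α} (ht : MeasurableSet[generateFrom (range 𝓒)] t) : μ (f ⁻¹' t ∩ 𝓚) = μ (t ∩ 𝓚) := by
  have hle : generateFrom (range 𝓒) ≤ ‹MeasurableSpace α› :=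
    generateFrom_le (by rintro _ ⟨w, rfl⟩; exact measurableSet_cylinder hf h₀ h₁ w)
  have : IsFiniteMeasure (μ.restrict 𝓚) :=
    isFiniteMeasure_restrict.2 (ne_top_of_le_ne_top hμ (measure_mono cantor_subset_union))
  have hmap {s : Set α} (hs : MeasurableSet s) : (μ.restrict 𝓚).map f s = μ (f ⁻¹' s ∩ 𝓚) := by
    rw [Measure.map_apply hf hs, Measure.restrict_apply (hf hs)]
  have hatoms : ∀ s ∈ range 𝓒,
      ((μ.restrict 𝓚).map f).trim hle s = (μ.restrict 𝓚).trim hle s := by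
    rintro _ ⟨w, rfl⟩
    have hw := measurableSet_cylinder hf h₀ h₁ w
    rw [trim_measurableSet_eq hle (measurableSet_generateFrom ⟨w, rfl⟩),
      trim_measurableSet_eq hle (measurableSet_generateFrom ⟨w, rfl⟩), hmap hw,
      Measure.restrict_apply hw]
    exact measure_preimage_cylinder_inter_cantor hf h₀ h₁ hI hμ hequal w
  have key := DFunLike.congr_fun (ext_of_generate_finite _ rfl (isPiSystem_range_cylinder hI)
    hatoms (hatoms univ ⟨[], rfl⟩)) t
  rwa [trim_measurableSet_eq hle ht, trim_measurableSet_eq hle ht, hmap (hle t ht),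
    Measure.restrict_apply (hle t ht)] at key

end Measure

section Metric

variable [PseudoMetricSpace α] {lam : ℝ}

lemma pow_mul_dist_le_of_mem_cylinder (hlam : 0 ≤ lam)
    (hexp₀ : ∀ x ∈ I₀, ∀ y ∈ I₀, lam * dist x y ≤ dist (f x) (f y))
    (hexp₁ : ∀ x ∈ I₁, ∀ y ∈ I₁, lam * dist x y ≤ dist (f x) (f y))
    {w : List Bool} {x y : α} (hx : x ∈ 𝓒 w) (hy : y ∈ 𝓒 w) :
    lam ^ w.length * dist x y ≤ dist (f^[w.length] x) (f^[w.length] y) := by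
  induction w generalizing x y with
  | nil => simp
  | cons a w ih =>
    have hstep : lam * dist x y ≤ dist (f x) (f y) := by
      cases a
      exacts [hexp₀ x (by simpa using hx.1) y (by simpa using hy.1),
        hexp₁ x (by simpa using hx.1) y (by simpa using hy.1)]
    calc lam ^ (a :: w).length * dist x y = lam ^ w.length * (lam * dist x y) := by
          rw [List.length_cons, pow_succ, mul_assoc]
      _ ≤ lam ^ w.length * dist (f x) (f y) := by gcongr
      _ ≤ _ := ih hx.2 hy.2

lemma exists_cylinder_inter_cantor_subset (hlam : 1 < lam)
    (hexp₀ : ∀ x ∈ I₀, ∀ y ∈ I₀, lam * dist x y ≤ dist (f x) (f y))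
    (hexp₁ : ∀ x ∈ I₁, ∀ y ∈ I₁, lam * dist x y ≤ dist (f x) (f y))
    (hbdd : Bornology.IsBounded (I₀ ∪ I₁)) {x : α} (hx : x ∈ 𝓚) {U : Set α}
    (hU : U ∈ nhds x) : ∃ w, x ∈ 𝓒 w ∧ 𝓒 w ∩ 𝓚 ⊆ U := by
  obtain ⟨ε, hε, hball⟩ := Metric.mem_nhds_iff.1 hU
  obtain ⟨n, hn⟩ := pow_unbounded_of_one_lt (Metric.diam (I₀ ∪ I₁) / ε) hlam
  refine ⟨List.ofFn (itinerary f I₁ x n), mem_cylinder_itinerary fun k _ => hx k,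
    fun y ⟨hy, hyK⟩ => hball ?_⟩
  have hexp := pow_mul_dist_le_of_mem_cylinder (by linarith) hexp₀ hexp₁ hy
    (mem_cylinder_itinerary fun k _ => hx k)
  rw [List.length_ofFn] at hexp
  have hdiam := Metric.dist_le_diam_of_mem hbdd (hyK n) (hx n)
  rw [div_lt_iff₀ hε] at hn
  exact lt_of_mul_lt_mul_left (hexp.trans_lt (hdiam.trans_lt hn)) (by positivity)

open MeasurableSpace in
lemma exists_measurableSet_generateFrom_inter_cantor_eq [MeasurableSpace α] [BorelSpace α]
    (hlam : 1 < lam)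
    (hexp₀ : ∀ x ∈ I₀, ∀ y ∈ I₀, lam * dist x y ≤ dist (f x) (f y))
    (hexp₁ : ∀ x ∈ I₁, ∀ y ∈ I₁, lam * dist x y ≤ dist (f x) (f y))
    (hbdd : Bornology.IsBounded (I₀ ∪ I₁)) {B : Set α} (hB : MeasurableSet B) :
    ∃ t, MeasurableSet[generateFrom (range 𝓒)] t ∧ t ∩ 𝓚 = B ∩ 𝓚 := by
  induction B, hB using MeasurableSet.induction_on_open with
  | isOpen U hU =>
    refine ⟨⋃ w ∈ {w | 𝓒 w ∩ 𝓚 ⊆ U}, 𝓒 w,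
      MeasurableSet.biUnion (to_countable _) fun w _ => measurableSet_generateFrom ⟨w, rfl⟩, ?_⟩
    ext x
    simp only [mem_inter_iff, mem_iUnion, exists_prop]
    refine ⟨fun ⟨⟨w, hwU, hxw⟩, hx⟩ => ⟨hwU ⟨hxw, hx⟩, hx⟩, fun ⟨hxU, hx⟩ => ⟨?_, hx⟩⟩
    obtain ⟨w, hxw, hwU⟩ :=
      exists_cylinder_inter_cantor_subset hlam hexp₀ hexp₁ hbdd hx (hU.mem_nhds hxU)
    exact ⟨w, hwU, hxw⟩
  | compl B _ ih =>
    obtain ⟨t, ht, htB⟩ := ih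
    refine ⟨tᶜ, ht.compl, ?_⟩
    rw [← sdiff_eq_compl_inter, ← sdiff_eq_compl_inter, ← sdiff_inter_self_eq_sdiff, htB,
      sdiff_inter_self_eq_sdiff]
  | iUnion g _ _ ih =>
    choose t ht htg using ih
    exact ⟨⋃ i, t i, .iUnion ht, by simp only [iUnion_inter, htg]⟩

lemma measure_preimage_inter_cantor [MeasurableSpace α] [BorelSpace α] {μ : Measure α}
    (hf : Measurable f) (h₀ : MeasurableSet I₀) (h₁ : MeasurableSet I₁) (hI : Disjoint I₀ I₁)
    (hμ : μ (I₀ ∪ I₁) ≠ ⊤)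
    (hequal : ∀ w w' : List Bool, w.length = w'.length → μ (𝓒 w) = μ (𝓒 w'))
    (hlam : 1 < lam)
    (hexp₀ : ∀ x ∈ I₀, ∀ y ∈ I₀, lam * dist x y ≤ dist (f x) (f y))
    (hexp₁ : ∀ x ∈ I₁, ∀ y ∈ I₁, lam * dist x y ≤ dist (f x) (f y))
    (hbdd : Bornology.IsBounded (I₀ ∪ I₁)) {B : Set α} (hB : MeasurableSet B) :
    μ (f ⁻¹' B ∩ 𝓚) = μ (B ∩ 𝓚) := by
  obtain ⟨t, ht, htB⟩ := exists_measurableSet_generateFrom_inter_cantor_eq hlam hexp₀ hexp₁ hbdd hB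
  have htrace (s : Set α) : f ⁻¹' s ∩ 𝓚 = f ⁻¹' (s ∩ 𝓚) ∩ 𝓚 := by
    rw [preimage_inter, inter_assoc, inter_eq_right.2 mapsTo_cantor.subset_preimage]
  calc μ (f ⁻¹' B ∩ 𝓚) = μ (f ⁻¹' t ∩ 𝓚) := by rw [htrace, ← htB, ← htrace]
    _ = μ (t ∩ 𝓚) :=
        measure_preimage_inter_cantor_of_measurableSet_generateFrom hf h₀ h₁ hI hμ hequal ht
    _ = μ (B ∩ 𝓚) := by rw [htB]

end Metric

end Repeller

theorem stmt_18_general (b₀ : ℝ) (hb₀ : 0 < b₀)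
    (I₀ I₁ : Set ℝ) (hI₀ : I₀ = Set.Icc (-1) (-b₀)) (hI₁ : I₁ = Set.Icc b₀ 1)
    (f : ℝ → ℝ) (hfmeas : Measurable f)
    (lam : ℝ) (hlam : 1 < lam)
    (hexp₀ : ∀ x ∈ I₀, ∀ y ∈ I₀, lam * |x - y| ≤ |f x - f y|)
    (hexp₁ : ∀ x ∈ I₁, ∀ y ∈ I₁, lam * |x - y| ≤ |f x - f y|)
    -- the dynamically defined Cantor set
    (K : Set ℝ) (hKdef : K = {x : ℝ | ∀ n : ℕ, f^[n] x ∈ I₀ ∪ I₁})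
    -- the atoms `I_{a₀…a_{n−1}}`: points whose itinerary starts with the word `w`
    (Atom : List Bool → Set ℝ)
    (hAtom : ∀ w : List Bool, Atom w =
      {x : ℝ | ∀ j : Fin w.length, f^[(j : ℕ)] x ∈ if w.get j then I₁ else I₀})
    -- all atoms of the same generation have equal Lebesgue measure
    (hequal : ∀ w w' : List Bool, w.length = w'.length →
      volume (Atom w) = volume (Atom w'))
    (B : Set ℝ) (hB : MeasurableSet B) :
    volume (f ⁻¹' B ∩ K) / volume K = volume (B ∩ K) / volume K := by
  obtain rfl : K = Repeller.cantor f I₀ I₁ := hKdef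
  obtain rfl : Atom = Repeller.cylinder f I₀ I₁ :=
    funext fun w => (hAtom w).trans (Repeller.cylinder_eq_setOf w).symm
  subst hI₀ hI₁
  have hI : Disjoint (Set.Icc (-1) (-b₀)) (Set.Icc b₀ 1) :=
    Set.disjoint_left.2 fun x hx₀ hx₁ => by linarith [hx₀.2, hx₁.1]
  have hμ : volume (Set.Icc (-1) (-b₀) ∪ Set.Icc b₀ 1) ≠ ⊤ :=
    measure_union_ne_top (by simp) (by simp)
  rw [Repeller.measure_preimage_inter_cantor hfmeas measurableSet_Icc measurableSet_Icc hI hμ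
    hequal hlam (by simpa only [Real.dist_eq] using hexp₀)
    (by simpa only [Real.dist_eq] using hexp₁)
    (Metric.isBounded_Icc _ _ |>.union (Metric.isBounded_Icc _ _)) hB]

/-- let `K` be the Cantor set dynamically defined (as in Bowen's construction)
by an expanding map with two increasing surjective branches on `I₀ = [−1,−b₀]`,
`I₁ = [b₀,1]`, with `m(K) > 0` and all atoms of the same generation of equal Lebesgue
measure.  Then `μ_K(B) := m(B ∩ K)/m(K)` is invariant under the circle map `f` extending the
branches: `μ_K(f⁻¹(B)) = μ_K(B)` for every Borel set `B`. -/
theorem stmt_18 (b₀ : ℝ) (hb₀ : 0 < b₀) (hb₀1 : b₀ < 1)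
    (I₀ I₁ : Set ℝ) (hI₀ : I₀ = Set.Icc (-1) (-b₀)) (hI₁ : I₁ = Set.Icc b₀ 1)
    (f : ℝ → ℝ) (hfmeas : Measurable f)
    (lam : ℝ) (hlam : 1 < lam)
    (hexp₀ : ∀ x ∈ I₀, ∀ y ∈ I₀, lam * |x - y| ≤ |f x - f y|)
    (hexp₁ : ∀ x ∈ I₁, ∀ y ∈ I₁, lam * |x - y| ≤ |f x - f y|)
    (hmono₀ : StrictMonoOn f I₀) (hmono₁ : StrictMonoOn f I₁)
    (hsurj₀ : f '' I₀ = Set.Icc (-1) 1) (hsurj₁ : f '' I₁ = Set.Icc (-1) 1)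
    -- the dynamically defined Cantor set
    (K : Set ℝ) (hKdef : K = {x : ℝ | ∀ n : ℕ, f^[n] x ∈ I₀ ∪ I₁})
    (hKpos : 0 < volume K)
    -- the atoms `I_{a₀…a_{n−1}}`: points whose itinerary starts with the word `w`
    (Atom : List Bool → Set ℝ)
    (hAtom : ∀ w : List Bool, Atom w =
      {x : ℝ | ∀ j : Fin w.length, f^[(j : ℕ)] x ∈ if w.get j then I₁ else I₀})
    -- all atoms of the same generation have equal Lebesgue measure
    (hequal : ∀ w w' : List Bool, w.length = w'.length →
      volume (Atom w) = volume (Atom w'))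
    (B : Set ℝ) (hB : MeasurableSet B) :
    volume (f ⁻¹' B ∩ K) / volume K = volume (B ∩ K) / volume K :=
  stmt_18_general b₀ hb₀ I₀ I₁ hI₀ hI₁ f hfmeas lam hlam hexp₀ hexp₁ K hKdef Atom hAtom hequal B hB
end
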